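/- Let V be a finite-dimensional complex vector space and Λ_1, …, Λ_k ∈ End(V) pairwise commuting with Λ_2, …, Λ_k semisimple. For g(z) = Σ_{i=0}^{k-1} g_i z^i ∈ G_k(V), g stabilizes Λ(z) = Σ Λ_i z^{-i} under the coadjoint action (i.e., Σ_{i=0}^{k-l}(Λ_{l+i} g_i − g_i Λ_{l+i}) = 0 for l = 1,…,k) if and only if g_{i-1} ∈ Ker(ad_{Λ_i}) ∩ ⋯ ∩ Ker(ad_{Λ_k}) for each i = 1, …, k. In particular dim Z(Λ) = Σ_{i=1}^{k} dim(Ker ad_{Λ_i} ∩ ⋯ ∩ Ker ad_{Λ_k}). -/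

import Mathlib

/-!
The `l`-th stabilizer equation reads `∑ᵢ ad_{Λ_{l+i}} g_i = 0`. Treat the equations in decreasing
order of `l`, knowing already that `g_i` commutes with `Λ_j` whenever `j - i > l`. Applying
`ad_{Λ_j}` for the largest index `j` occurring in the equation kills all other terms, because the
operators `ad_{Λ_m}` commute; this leaves `ad_{Λ_j}² g_{j-l} = 0`. As `ad` of a semisimple operator
is semisimple, `ad_{Λ_j} g_{j-l} = 0`, and peeling terms off from the top in this way shows that
every term vanishes; the last one, the only one that may involve the non-semisimple `Λ_1`, is then
zero on its own. Hence the stabilizer is the product of the common commutants, which gives the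
dimension count.
-/

open Module

/-- The linear map on `(g_0,…,g_{k-1})` whose vanishing is the stabilizer (coadjoint)
relation `Σ_{i=0}^{k-l} ad(Λ_{l+i})(g_i) = 0`, `l = 1,…,k`; its `l`-th component
(0-indexed) is `Σ_{i : l+1+i ≤ k} (Λ_{l+1+i} g_i − g_i Λ_{l+1+i})`. -/
noncomputable def coadStab (V : Type*) [AddCommGroup V] [Module ℂ V]
    (k : ℕ) (Λ : ℕ → Module.End ℂ V) :
    (Fin k → Module.End ℂ V) →ₗ[ℂ] (Fin k → Module.End ℂ V) :=
  LinearMap.pi fun l => ∑ i : Fin k,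
    if (l : ℕ) + 1 + (i : ℕ) ≤ k then
      (LinearMap.mulLeft ℂ (Λ ((l : ℕ) + 1 + (i : ℕ)))
        - LinearMap.mulRight ℂ (Λ ((l : ℕ) + 1 + (i : ℕ)))) ∘ₗ LinearMap.proj i
    else 0

theorem LinearMap.mulLeft_sub_mulRight_apply_eq_zero_iff {R A : Type*} [CommRing R] [Ring A]
    [Algebra R A] {a x : A} :
    (LinearMap.mulLeft R a - LinearMap.mulRight R a) x = 0 ↔ Commute a x :=
  sub_eq_zero

theorem Module.End.IsFinitelySemisimple.apply_eq_zero_of_apply_apply_eq_zero {R M : Type*}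
    [CommRing R] [AddCommGroup M] [Module R M] {f : Module.End R M}
    (hf : f.IsFinitelySemisimple) {m : M} (h : f (f m) = 0) : f m = 0 := by
  have hm : m ∈ f.genEigenspace 0 (2 : ℕ) := by
    rw [Module.End.mem_genEigenspace_nat]; simpa [sq] using h
  rwa [hf.genEigenspace_eq_eigenspace 0 (by norm_num), Module.End.mem_eigenspace_iff,
    zero_smul] at hm

theorem Module.End.apply_eq_zero_of_sum_eq_zero_of_triangular {ι R W : Type*} [LinearOrder ι]
    [Semiring R] [AddCommMonoid W] [Module R W] (D : ι → Module.End R W) (x : ι → W)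
    (s : Finset ι) (hcomm : ∀ a ∈ s, ∀ b ∈ s, Commute (D a) (D b))
    (hker : ∀ a ∈ s, ∀ b ∈ s, b < a → ∀ y, D a (D a y) = 0 → D a y = 0)
    (htri : ∀ a ∈ s, ∀ b ∈ s, b < a → D a (x b) = 0)
    (hsum : ∑ a ∈ s, D a (x a) = 0) : ∀ a ∈ s, D a (x a) = 0 := by
  classical
  induction s using Finset.induction_on_max with
  | empty => simp
  | insert a s ha ih =>
    have hmem : a ∈ insert a s := s.mem_insert_self a
    have hsub {b} (hb : b ∈ s) : b ∈ insert a s := s.mem_insert_of_mem hb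
    rw [Finset.sum_insert (fun h => (ha a h).false)] at hsum
    have htop : D a (x a) = 0 := by
      obtain rfl | ⟨b, hb⟩ := s.eq_empty_or_nonempty
      · simpa using hsum
      refine hker a hmem b (hsub hb) (ha b hb) _ ?_
      have hlower : ∑ b ∈ s, D a (D b (x b)) = 0 := Finset.sum_eq_zero fun b hb => by
        rw [← Module.End.mul_apply, (hcomm a hmem b (hsub hb)).eq, Module.End.mul_apply,
          htri a hmem b (hsub hb) (ha b hb), map_zero]
      have h := congrArg (D a) hsum
      rwa [map_add, map_sum, hlower, add_zero, map_zero] at h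
    rw [htop, zero_add] at hsum
    have hs := ih (fun a ha b hb => hcomm a (hsub ha) b (hsub hb))
      (fun a ha b hb => hker a (hsub ha) b (hsub hb))
      (fun a ha b hb => htri a (hsub ha) b (hsub hb)) hsum
    exact fun b hb => (Finset.mem_insert.1 hb).elim (· ▸ htop) (hs b)

theorem LinearMap.commute_mulLeft_sub_mulRight {R A : Type*} [CommRing R] [Ring A] [Algebra R A]
    {a b : A} (h : Commute a b) :
    Commute (LinearMap.mulLeft R a - LinearMap.mulRight R a)
      (LinearMap.mulLeft R b - LinearMap.mulRight R b) := by
  simpa only [LieAlgebra.ad_eq_lmul_left_sub_lmul_right A, Pi.sub_apply] using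
    LieAlgebra.commute_ad_of_commute (R := R) h

theorem Module.End.IsSemisimple.mulLeft_sub_mulRight {K V : Type*} [Field K] [PerfectField K]
    [AddCommGroup V] [Module K V] [FiniteDimensional K V] {a : Module.End K V}
    (ha : a.IsSemisimple) :
    Module.End.IsSemisimple (LinearMap.mulLeft K a - LinearMap.mulRight K a) := by
  have h := LieAlgebra.ad_isSemisimple_of_isSemisimple ha
  rw [LieAlgebra.ad_eq_lmul_left_sub_lmul_right] at h
  exact h

def Submodule.piUnivEquiv {R ι : Type*} [Semiring R] {M : ι → Type*} [∀ i, AddCommMonoid (M i)]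
    [∀ i, Module R (M i)] (p : ∀ i, Submodule R (M i)) :
    Submodule.pi Set.univ p ≃ₗ[R] ∀ i, p i where
  toFun x i := ⟨x.1 i, x.2 i (Set.mem_univ i)⟩
  map_add' _ _ := rfl
  map_smul' _ _ := rfl
  invFun f := ⟨fun i => f i, fun i _ => (f i).2⟩
  left_inv _ := rfl
  right_inv _ := rfl

theorem Submodule.finrank_pi_univ {K ι : Type*} [DivisionRing K] [Fintype ι] {M : ι → Type*}
    [∀ i, AddCommGroup (M i)] [∀ i, Module K (M i)] [∀ i, FiniteDimensional K (M i)]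
    (p : ∀ i, Submodule K (M i)) :
    finrank K (Submodule.pi Set.univ p) = ∑ i, finrank K (p i) := by
  rw [(Submodule.piUnivEquiv p).finrank_eq, Module.finrank_pi_fintype]

theorem Fin.sum_univ_add_one_eq_sum_Icc {M : Type*} [AddCommMonoid M] (k : ℕ) (f : ℕ → M) :
    ∑ i : Fin k, f (i + 1) = ∑ n ∈ Finset.Icc 1 k, f n := by
  rw [Fin.sum_univ_eq_sum_range (fun i => f (i + 1)), Finset.range_eq_Ico, Finset.sum_Ico_add',
    zero_add, Finset.Ico_add_one_right_eq_Icc]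

section Stabilizer

variable {V : Type*} [AddCommGroup V] [Module ℂ V] {k : ℕ} {Λ : ℕ → Module.End ℂ V}

theorem coadStab_apply (g : Fin k → Module.End ℂ V) (l : Fin k) :
    coadStab V k Λ g l = ∑ i ∈ Finset.univ.filter (fun i : Fin k => (l : ℕ) + 1 + i ≤ k),
      (LinearMap.mulLeft ℂ (Λ (l + 1 + i)) - LinearMap.mulRight ℂ (Λ (l + 1 + i))) (g i) := by
  simp only [coadStab, LinearMap.pi_apply, LinearMap.sum_apply, Finset.sum_filter]
  refine Finset.sum_congr rfl fun i _ => ?_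
  split_ifs <;> rfl

theorem commute_of_coadStab_eq_zero [FiniteDimensional ℂ V]
    (hc : ∀ i j, 1 ≤ i → i ≤ k → 1 ≤ j → j ≤ k → Commute (Λ i) (Λ j))
    (hs : ∀ i, 2 ≤ i → i ≤ k → (Λ i).IsSemisimple) {g : Fin k → Module.End ℂ V}
    (hg : coadStab V k Λ g = 0) {l : ℕ} (hl : l ≤ k) :
    ∀ i : Fin k, ∀ j, l + 1 + i ≤ j → j ≤ k → Commute (Λ j) (g i) := by
  induction hl using Nat.decreasingInduction with
  | self => intros; omega
  | of_succ l hlk ih =>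
    intro i j hij hjk
    obtain hlt | rfl := hij.lt_or_eq
    · exact ih i j (by omega) hjk
    have hsum := coadStab_apply (Λ := Λ) g ⟨l, hlk⟩ ▸ congrFun hg ⟨l, hlk⟩
    rw [← LinearMap.mulLeft_sub_mulRight_apply_eq_zero_iff (R := ℂ)]
    refine Module.End.apply_eq_zero_of_sum_eq_zero_of_triangular 
      (fun a : Fin k => LinearMap.mulLeft ℂ (Λ (l + 1 + a)) - LinearMap.mulRight ℂ (Λ (l + 1 + a)))
      g _ ?_ ?_ ?_ hsum i (by simpa using hjk)
    · intro a ha b hb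
      simp only [Finset.mem_filter, Finset.mem_univ, true_and] at ha hb
      exact LinearMap.commute_mulLeft_sub_mulRight (hc _ _ (by omega) ha (by omega) hb)
    · intro a ha b _ hba y
      simp only [Finset.mem_filter, Finset.mem_univ, true_and] at ha
      have hss := (hs (l + 1 + a) (by omega) ha).mulLeft_sub_mulRight
      exact hss.isFinitelySemisimple.apply_eq_zero_of_apply_apply_eq_zero
    · intro a ha b _ hba
      simp only [Finset.mem_filter, Finset.mem_univ, true_and] at ha
      exact LinearMap.mulLeft_sub_mulRight_apply_eq_zero_iff.2 (ih b _ (by omega) ha)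

theorem coadStab_eq_zero_iff [FiniteDimensional ℂ V]
    (hc : ∀ i j, 1 ≤ i → i ≤ k → 1 ≤ j → j ≤ k → Commute (Λ i) (Λ j))
    (hs : ∀ i, 2 ≤ i → i ≤ k → (Λ i).IsSemisimple) (g : Fin k → Module.End ℂ V) :
    coadStab V k Λ g = 0 ↔ ∀ i : Fin k, ∀ j, (i : ℕ) + 1 ≤ j → j ≤ k → Commute (g i) (Λ j) := by
  refine ⟨fun hg i j hij hjk => (commute_of_coadStab_eq_zero hc hs hg k.zero_le i j
    (by omega) hjk).symm, fun h => funext fun l => ?_⟩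
  rw [coadStab_apply]
  refine Finset.sum_eq_zero fun i hi => ?_
  rw [Finset.mem_filter] at hi
  exact LinearMap.mulLeft_sub_mulRight_apply_eq_zero_iff.2 (h i _ (by omega) hi.2).symm

theorem ker_coadStab [FiniteDimensional ℂ V]
    (hc : ∀ i j, 1 ≤ i → i ≤ k → 1 ≤ j → j ≤ k → Commute (Λ i) (Λ j))
    (hs : ∀ i, 2 ≤ i → i ≤ k → (Λ i).IsSemisimple) :
    LinearMap.ker (coadStab V k Λ) = Submodule.pi Set.univ fun i : Fin k =>
      ⨅ j : {j : ℕ // (i : ℕ) + 1 ≤ j ∧ j ≤ k},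
        LinearMap.ker (LinearMap.mulLeft ℂ (Λ j) - LinearMap.mulRight ℂ (Λ j)) := by
  ext g
  simp only [LinearMap.mem_ker, coadStab_eq_zero_iff hc hs, Submodule.mem_pi, Set.mem_univ,
    true_imp_iff, Submodule.mem_iInf, LinearMap.mulLeft_sub_mulRight_apply_eq_zero_iff,
    Subtype.forall, and_imp]
  exact forall_congr' fun i => forall₃_congr fun j _ _ => Commute.symm_iff

end Stabilizer

/-- for a normal form `Λ(z) = Σ_{i=1}^k Λ_i z^{-i}` (coefficients pairwise
commuting, `Λ_2,…,Λ_k` semisimple), an element `g ∈ G_k(V)` stabilizes `Λ` under the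
coadjoint action iff `g_{i-1}` commutes with `Λ_i, …, Λ_k` for each `i = 1,…,k`.
In particular `dim Z(Λ) = Σ_{i=1}^k dim (Ker ad_{Λ_i} ∩ ⋯ ∩ Ker ad_{Λ_k})`. -/
theorem stmt15
    (V : Type*) [AddCommGroup V] [Module ℂ V] [FiniteDimensional ℂ V]
    (k : ℕ) (hk : 0 < k) (Λ : ℕ → Module.End ℂ V)
    (hc : ∀ i j, 1 ≤ i → i ≤ k → 1 ≤ j → j ≤ k → Commute (Λ i) (Λ j))
    (hs : ∀ i, 2 ≤ i → i ≤ k → (Λ i).IsSemisimple) :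
    (∀ g : Fin k → Module.End ℂ V, IsUnit (g ⟨0, hk⟩) →
      (coadStab V k Λ g = 0 ↔
        ∀ i : Fin k, ∀ j, (i : ℕ) + 1 ≤ j → j ≤ k → Commute (g i) (Λ j))) ∧
    finrank ℂ ↥(LinearMap.ker (coadStab V k Λ)) =
      ∑ i ∈ Finset.Icc 1 k, finrank ℂ
        ↥(⨅ j : {j : ℕ // i ≤ j ∧ j ≤ k},
          LinearMap.ker (LinearMap.mulLeft ℂ (Λ (j : ℕ))
            - LinearMap.mulRight ℂ (Λ (j : ℕ)))) := by
  refine ⟨fun g _ => coadStab_eq_zero_iff hc hs g, ?_⟩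
  rw [ker_coadStab hc hs, Submodule.finrank_pi_univ, ← Fin.sum_univ_add_one_eq_sum_Icc]
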